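/- arXiv:1801.09243 — 5 statements merged into one kernel-verified Lean document; each statement's English description precedes it below -/
import Mathlib

section
/- Let D be an idempotent-complete triangulated category and let L, R be strictly full triangulated subcategories of D, each closed under direct summands, such that Hom(l, r) = 0 for every l ∈ L and r ∈ R. Let D' be the full subcategory of D consisting of those objects a admitting a distinguished triangle l → a → r → l[1] with l ∈ L and r ∈ R. Then D' is a strictly full triangulated subcategory of D closed under direct summands and containing both L and R, and the pair (L, R) is an m-structure on D', i.e. it is simultaneously a t-structure and a weight structure on D'. -/
/-!
STATEMENT 2: Let `D` be an idempotent-complete triangulated category and `L`, `R`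
strictly full triangulated subcategories of `D`, each closed under direct summands,
with `Hom(l, r) = 0` for every `l ∈ L`, `r ∈ R`.  Let `D'` be the full subcategory of
objects `a` admitting a distinguished triangle `l → a → r → l[1]` with `l ∈ L`,
`r ∈ R`.  Then `D'` is a strictly full triangulated subcategory of `D` closed under
direct summands containing both `L` and `R`, and `(L, R)` is an m-structure on `D'`.
-/

open CategoryTheory CategoryTheory.Limits CategoryTheory.Pretriangulated ZeroObject

universe v u

variable (D : Type u) [Category.{v} D] [HasZeroObject D] [HasShift D ℤ] [Preadditive D]
  [∀ n : ℤ, (CategoryTheory.shiftFunctor D n).Additive] [Pretriangulated D]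

/-- `P` is the class of objects of a strictly full triangulated subcategory of `D`
closed under direct summands: it contains the zero object and is closed under
isomorphisms, shifts in both directions, cones of morphisms (two-out-of-three in
distinguished triangles) and direct summands. -/
structure IsThickTriangulatedSub (P : Set D) : Prop where
  zero : (0 : D) ∈ P
  iso : ∀ ⦃x y : D⦄, (x ≅ y) → x ∈ P → y ∈ P
  shift : ∀ (x : D) (n : ℤ), x ∈ P → (x⟦n⟧ : D) ∈ P
  cone : ∀ T : Triangle D, (T ∈ distTriang D) → T.obj₁ ∈ P → T.obj₂ ∈ P → T.obj₃ ∈ P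
  summand : ∀ (x y : D) (i : x ⟶ y) (r : y ⟶ x), i ≫ r = 𝟙 x → y ∈ P → x ∈ P

/-- `(Dle, Dgt)` is an m-structure (simultaneously a t-structure and a weight
structure) on the full subcategory of `D` whose class of objects is `P`. -/
structure IsMStructureOn (P Dle Dgt : Set D) : Prop where
  le_subset : Dle ⊆ P
  gt_subset : Dgt ⊆ P
  le_iso : ∀ ⦃x y : D⦄, (x ≅ y) → x ∈ Dle → y ∈ Dle
  gt_iso : ∀ ⦃x y : D⦄, (x ≅ y) → x ∈ Dgt → y ∈ Dgt
  /-- Orthogonality: `Hom(a, b) = 0` for `a ∈ Dle`, `b ∈ Dgt`. -/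
  orth : ∀ a ∈ Dle, ∀ b ∈ Dgt, ∀ f : a ⟶ b, f = 0
  /-- t-structure invariance: `Dle[1] ⊆ Dle`. -/
  le_shift : ∀ x ∈ Dle, (x⟦(1 : ℤ)⟧ : D) ∈ Dle
  /-- t-structure invariance: `Dgt[-1] ⊆ Dgt`. -/
  gt_negShift : ∀ x ∈ Dgt, (x⟦(-1 : ℤ)⟧ : D) ∈ Dgt
  /-- weight structure co-invariance: `Dle[-1] ⊆ Dle`. -/
  le_negShift : ∀ x ∈ Dle, (x⟦(-1 : ℤ)⟧ : D) ∈ Dle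
  /-- weight structure co-invariance: `Dgt[1] ⊆ Dgt`. -/
  gt_shift : ∀ x ∈ Dgt, (x⟦(1 : ℤ)⟧ : D) ∈ Dgt
  /-- `Dle` is Karoubi-closed (closed under direct summands). -/
  le_summand : ∀ (x y : D) (i : x ⟶ y) (r : y ⟶ x), i ≫ r = 𝟙 x → y ∈ Dle → x ∈ Dle
  /-- `Dgt` is Karoubi-closed (closed under direct summands). -/
  gt_summand : ∀ (x y : D) (i : x ⟶ y) (r : y ⟶ x), i ≫ r = 𝟙 x → y ∈ Dgt → x ∈ Dgt
  /-- Decomposition: every object of `P` fits in a distinguished triangle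
  `a≤ → a → a> → a≤[1]` with `a≤ ∈ Dle` and `a> ∈ Dgt`. -/
  decomp : ∀ a ∈ P, ∃ (x y : D) (f : x ⟶ a) (g : a ⟶ y) (d : y ⟶ (x⟦(1 : ℤ)⟧ : D)),
      (Triangle.mk f g d ∈ distTriang D) ∧ x ∈ Dle ∧ y ∈ Dgt


/-!
Write `L * R` for the extension product. Since `Hom(L, R[1]) = 0`, every triangle
`r → x → l → r[1]` splits, so `R * L ⊆ L * R`; by associativity of the extension product,
`(L * R) * (L * R) = L * (R * L) * R ⊆ (L * L) * (R * R) = L * R`, i.e. `L * R` is closed under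
extensions. If `x` is a summand of `y ∈ L * R` with triangle `l → y → r`, orthogonality lifts the
idempotent of `y` cutting out `x` to an idempotent of `l`; its image `a ∈ L` maps to `x`, and the
cone of `a → x` is a summand of `r`. The axioms of an m-structure are then immediate.
-/

section ExtensionProduct

variable {D}

open ObjectProperty

lemma extensionProduct_le_swap_of_hom_eq_zero {P Q : ObjectProperty D}
    (h : ∀ X Y, P X → Q Y → ∀ f : Y ⟶ X⟦(1 : ℤ)⟧, f = 0) :
    extensionProduct P Q ≤ extensionProduct Q P := by
  rintro X ⟨A, B, f, g, d, hT, hA, hB⟩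
  obtain ⟨e, -, -⟩ := exists_iso_binaryBiproduct_of_distTriang _ hT (h A B hA hB d)
  exact (extensionProduct Q P).prop_of_iso (e ≪≫ biprod.braiding A B).symm
    ⟨B, A, _, _, _, binaryBiproductTriangle_distinguished B A, hB, hA⟩

lemma extensionProduct_extensionProduct_le [IsTriangulated D] {P Q : ObjectProperty D}
    (hP : extensionProduct P P ≤ P) (hQ : extensionProduct Q Q ≤ Q)
    (hQP : extensionProduct Q P ≤ extensionProduct P Q) :
    extensionProduct (extensionProduct P Q) (extensionProduct P Q) ≤ extensionProduct P Q :=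
  calc extensionProduct (extensionProduct P Q) (extensionProduct P Q)
      = extensionProduct P (extensionProduct (extensionProduct Q P) Q) := by
        rw [extensionProduct_assoc, extensionProduct_assoc Q P Q]
    _ ≤ extensionProduct P (extensionProduct (extensionProduct P Q) Q) :=
        monotone_extensionProduct_right _ (monotone_extensionProduct_left _ hQP)
    _ = extensionProduct (extensionProduct P P) (extensionProduct Q Q) := by
        rw [extensionProduct_assoc, extensionProduct_assoc]
    _ ≤ extensionProduct P Q :=
        (monotone_extensionProduct_left _ hP).trans (monotone_extensionProduct_right _ hQ)

lemma exists_retract_obj₃_of_retract_mor₁ {T T' : Triangle D} (hT : T ∈ distTriang D)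
    (hT' : T' ∈ distTriang D) (i₁ : T'.obj₁ ⟶ T.obj₁) (r₁ : T.obj₁ ⟶ T'.obj₁)
    (i₂ : T'.obj₂ ⟶ T.obj₂) (r₂ : T.obj₂ ⟶ T'.obj₂) (hi : T'.mor₁ ≫ i₂ = i₁ ≫ T.mor₁)
    (hr : T.mor₁ ≫ r₂ = r₁ ≫ T'.mor₁) (h₁ : i₁ ≫ r₁ = 𝟙 _) (h₂ : i₂ ≫ r₂ = 𝟙 _) :
    ∃ (i₃ : T'.obj₃ ⟶ T.obj₃) (r₃ : T.obj₃ ⟶ T'.obj₃), i₃ ≫ r₃ = 𝟙 _ := by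
  obtain ⟨i₃, hi₂, hi₃⟩ := complete_distinguished_triangle_morphism _ _ hT' hT i₁ i₂ hi
  obtain ⟨r₃, hr₂, hr₃⟩ := complete_distinguished_triangle_morphism _ _ hT hT' r₁ r₂ hr
  let φ : T' ⟶ T' :=
    Triangle.homMk _ _ i₁ i₂ i₃ hi hi₂ hi₃ ≫ Triangle.homMk _ _ r₁ r₂ r₃ hr hr₂ hr₃
  have : IsIso φ.hom₃ := isIso₃_of_isIso₁₂ φ hT' hT'
    (by change IsIso (i₁ ≫ r₁); rw [h₁]; infer_instance)
    (by change IsIso (i₂ ≫ r₂); rw [h₂]; infer_instance)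
  exact ⟨i₃, r₃ ≫ inv φ.hom₃, by rw [← Category.assoc]; exact IsIso.hom_inv_id φ.hom₃⟩

end ExtensionProduct

section Orthogonal

variable {D} {L R : ObjectProperty D}

open ObjectProperty

lemma IsThickTriangulatedSub.extensionProduct_self_le (hL : IsThickTriangulatedSub D L) :
    extensionProduct L L ≤ L := by
  rintro X ⟨A, B, f, g, d, hT, hA, hB⟩
  exact hL.cone _ (inv_rot_of_distTriang _ hT) (hL.shift B (-1) hB) hA

lemma eq_zero_of_comp_mor₁_eq_zero (hR : IsThickTriangulatedSub D R)
    (horth : ∀ l, L l → ∀ r, R r → ∀ f : l ⟶ r, f = 0) {T : Triangle D} (hT : T ∈ distTriang D)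
    (h₃ : R T.obj₃) {X : D} (hX : L X) (δ : X ⟶ T.obj₁) (hδ : δ ≫ T.mor₁ = 0) : δ = 0 := by
  obtain ⟨w, rfl⟩ := Triangle.coyoneda_exact₂ _ (inv_rot_of_distTriang _ hT) δ hδ
  rw [horth _ hX _ (hR.shift _ (-1) h₃) w]
  exact zero_comp

lemma exists_idempotent_comp_mor₁_eq (hR : IsThickTriangulatedSub D R)
    (horth : ∀ l, L l → ∀ r, R r → ∀ f : l ⟶ r, f = 0) {T : Triangle D} (hT : T ∈ distTriang D)
    (h₁ : L T.obj₁) (h₃ : R T.obj₃) {e : T.obj₂ ⟶ T.obj₂} (he : e ≫ e = e) :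
    ∃ e' : T.obj₁ ⟶ T.obj₁, e' ≫ e' = e' ∧ e' ≫ T.mor₁ = T.mor₁ ≫ e := by
  obtain ⟨e', he'⟩ := Triangle.coyoneda_exact₂ T hT (T.mor₁ ≫ e) (horth _ h₁ _ h₃ _)
  refine ⟨e', sub_eq_zero.1 (eq_zero_of_comp_mor₁_eq_zero hR horth hT h₃ h₁ _ ?_), he'.symm⟩
  rw [Preadditive.sub_comp, Category.assoc, ← he', ← Category.assoc, ← he', Category.assoc, he,
    sub_self]

lemma extensionProduct_of_retract [IsIdempotentComplete D] (hL : IsThickTriangulatedSub D L)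
    (hR : IsThickTriangulatedSub D R) (horth : ∀ l, L l → ∀ r, R r → ∀ f : l ⟶ r, f = 0)
    {x y : D} (i : x ⟶ y) (q : y ⟶ x) (hiq : i ≫ q = 𝟙 x) (hy : extensionProduct L R y) :
    extensionProduct L R x := by
  obtain ⟨l, r, f, g, d, hT, hl, hr⟩ := hy
  have hqi : (q ≫ i) ≫ q ≫ i = q ≫ i := by rw [Category.assoc, reassoc_of% hiq]
  obtain ⟨e, he, hfe⟩ : ∃ e : l ⟶ l, e ≫ e = e ∧ e ≫ f = f ≫ q ≫ i :=
    exists_idempotent_comp_mor₁_eq hR horth hT hl hr hqi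
  obtain ⟨a, ia, pa, hiapa, hpaia⟩ := IsIdempotentComplete.idempotents_split l e he
  obtain ⟨c, g', d', hTx⟩ := distinguished_cocone_triangle (ia ≫ f ≫ q)
  obtain ⟨j, p, hjp⟩ := exists_retract_obj₃_of_retract_mor₁ hT hTx ia pa i q
    (by change (ia ≫ f ≫ q) ≫ i = ia ≫ f
        rw [Category.assoc, Category.assoc, ← hfe, ← hpaia, Category.assoc, reassoc_of% hiapa])
    (by change f ≫ q = pa ≫ ia ≫ f ≫ q
        rw [reassoc_of% hpaia, reassoc_of% hfe, hiq, Category.comp_id]) hiapa hiq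
  exact ⟨a, c, _, _, _, hTx, hL.summand a l ia pa hiapa hl, hR.summand c r j p hjp hr⟩

lemma IsThickTriangulatedSub.containsZero (hL : IsThickTriangulatedSub D L) : L.ContainsZero :=
  ⟨0, isZero_zero D, hL.zero⟩

lemma extensionProduct_shift (hL : IsThickTriangulatedSub D L) (hR : IsThickTriangulatedSub D R)
    {x : D} (n : ℤ) (hx : extensionProduct L R x) : extensionProduct L R (x⟦n⟧) := by
  obtain ⟨l, r, f, g, d, hT, hl, hr⟩ := hx
  exact ⟨_, _, _, _, _, Triangle.shift_distinguished _ hT n, hL.shift l n hl, hR.shift r n hr⟩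

lemma isThickTriangulatedSub_extensionProduct [IsTriangulated D] [IsIdempotentComplete D]
    (hL : IsThickTriangulatedSub D L) (hR : IsThickTriangulatedSub D R)
    (horth : ∀ l, L l → ∀ r, R r → ∀ f : l ⟶ r, f = 0) :
    IsThickTriangulatedSub D (extensionProduct L R) where
  zero := by
    have := hR.containsZero
    exact le_extensionProduct_left R 0 hL.zero
  iso _ _ e hx := (extensionProduct L R).prop_of_iso e hx
  shift _ n hx := extensionProduct_shift hL hR n hx
  cone T hT h₁ h₂ := by
    have hRL : extensionProduct R L ≤ extensionProduct L R :=
      extensionProduct_le_swap_of_hom_eq_zero fun r l hr hl f => horth l hl _ (hR.shift r 1 hr) f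
    exact extensionProduct_extensionProduct_le hL.extensionProduct_self_le
      hR.extensionProduct_self_le hRL _
      ⟨_, _, _, _, _, rot_of_distTriang T hT, h₂, extensionProduct_shift hL hR 1 h₁⟩
  summand _ _ i q hiq hy := extensionProduct_of_retract hL hR horth i q hiq hy

end Orthogonal

theorem stmt2 [IsTriangulated D] [IsIdempotentComplete D] (L R : Set D)
    (hL : IsThickTriangulatedSub D L) (hR : IsThickTriangulatedSub D R)
    (horth : ∀ l ∈ L, ∀ r ∈ R, ∀ f : l ⟶ r, f = 0) :
    IsThickTriangulatedSub D
        {a : D | ∃ (l r : D) (f : l ⟶ a) (g : a ⟶ r) (d : r ⟶ (l⟦(1 : ℤ)⟧ : D)),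
          (Triangle.mk f g d ∈ distTriang D) ∧ l ∈ L ∧ r ∈ R} ∧
      L ⊆ {a : D | ∃ (l r : D) (f : l ⟶ a) (g : a ⟶ r) (d : r ⟶ (l⟦(1 : ℤ)⟧ : D)),
          (Triangle.mk f g d ∈ distTriang D) ∧ l ∈ L ∧ r ∈ R} ∧
      R ⊆ {a : D | ∃ (l r : D) (f : l ⟶ a) (g : a ⟶ r) (d : r ⟶ (l⟦(1 : ℤ)⟧ : D)),
          (Triangle.mk f g d ∈ distTriang D) ∧ l ∈ L ∧ r ∈ R} ∧
      IsMStructureOn D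
        {a : D | ∃ (l r : D) (f : l ⟶ a) (g : a ⟶ r) (d : r ⟶ (l⟦(1 : ℤ)⟧ : D)),
          (Triangle.mk f g d ∈ distTriang D) ∧ l ∈ L ∧ r ∈ R} L R := by
  have := hL.containsZero
  have := hR.containsZero
  have hLle : L ≤ ObjectProperty.extensionProduct L R := ObjectProperty.le_extensionProduct_left _
  have hRle : R ≤ ObjectProperty.extensionProduct L R := ObjectProperty.le_extensionProduct_right _
  refine ⟨isThickTriangulatedSub_extensionProduct hL hR horth, hLle, hRle,
    { le_subset := hLle
      gt_subset := hRle
      le_iso := hL.iso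
      gt_iso := hR.iso
      orth := horth
      le_shift := fun x => hL.shift x 1
      gt_negShift := fun x => hR.shift x (-1)
      le_negShift := fun x => hL.shift x (-1)
      gt_shift := fun x => hR.shift x 1
      le_summand := hL.summand
      gt_summand := hR.summand
      decomp := fun _ ha => ha }⟩
end

section
/- Let D be a triangulated category and let L, R be strictly full triangulated subcategories of D such that Hom(l, r) = 0 for every l ∈ L and r ∈ R. Suppose f : a' → a is a morphism in D, and there are distinguished triangles b' → a' → c' → b'[1] and b → a → c → b[1] with b, b' ∈ L and c, c' ∈ R. Then the cone of f admits a distinguished triangle l'' → Cone(f) → r'' → l''[1] with l'' ∈ L and r'' ∈ R; more precisely, f extends to a morphism of triangles (f_b, f, f_c) with f_b : b' → b and f_c : c' → c, and one may take l'' = Cone(f_b) and r'' = Cone(f_c). -/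
/-!
Because `Hom(b', c) = 0`, the composite `b' → a' → a → c` vanishes, so `b' → a' → a` factors
through `b → a`; this gives `f_b`. In any triangulated category, a commutative square between the
first maps of two distinguished triangles extends to a morphism of triangles `(f_b, f, f_c)`
whose cones fit into a distinguished triangle `Cone(f_b) → Cone(f) → Cone(f_c) → Cone(f_b)[1]`.
Finally `Cone(f_b) ∈ L` and `Cone(f_c) ∈ R` because both subcategories are closed under cones.
-/

open CategoryTheory CategoryTheory.Limits CategoryTheory.Pretriangulated ZeroObject

universe v u

variable (D : Type u) [Category.{v} D] [HasZeroObject D] [HasShift D ℤ] [Preadditive D]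
  [∀ n : ℤ, (CategoryTheory.shiftFunctor D n).Additive] [Pretriangulated D]

/-- `P` is the class of objects of a strictly full triangulated subcategory of `D`:
it contains the zero object and is closed under isomorphisms, shifts in both
directions, and cones of morphisms (two-out-of-three in distinguished triangles). -/
structure IsTriangulatedSub (P : Set D) : Prop where
  zero : (0 : D) ∈ P
  iso : ∀ ⦃x y : D⦄, (x ≅ y) → x ∈ P → y ∈ P
  shift : ∀ (x : D) (n : ℤ), x ∈ P → (x⟦n⟧ : D) ∈ P
  cone : ∀ T : Triangle D, (T ∈ distTriang D) → T.obj₁ ∈ P → T.obj₂ ∈ P → T.obj₃ ∈ P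

namespace CategoryTheory.Triangulated

variable {C : Type*} [Category C] [HasZeroObject C] [HasShift C ℤ] [Preadditive C]
  [∀ n : ℤ, (shiftFunctor C n).Additive] [Pretriangulated C] [IsTriangulated C]

/-- Write `X` for a cone of the common composite `b' → a' → a = b' → b → a`. The octahedra on
the two factorisations give triangles `c' → X → Cone(f)` and `Cone(f₁) → X → c`; the third
component of the morphism is `c' → X → c`, and the octahedron on that composite yields the
rotated triangle of cones `Cone(f) → Cone(f₃) → Cone(f₁)[1] → Cone(f)[1]`. -/
theorem exists_hom_with_distinguished_cones {T' T : Triangle C}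
    (hT' : T' ∈ distTriang C) (hT : T ∈ distTriang C)
    {f₁ : T'.obj₁ ⟶ T.obj₁} {f : T'.obj₂ ⟶ T.obj₂} (comm : f₁ ≫ T.mor₁ = T'.mor₁ ≫ f)
    {Cb : C} {ub : T.obj₁ ⟶ Cb} {vb : Cb ⟶ T'.obj₁⟦(1 : ℤ)⟧}
    (hCb : Triangle.mk f₁ ub vb ∈ distTriang C)
    {Cf : C} {u : T.obj₂ ⟶ Cf} {v : Cf ⟶ T'.obj₂⟦(1 : ℤ)⟧}
    (hCf : Triangle.mk f u v ∈ distTriang C) :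
    ∃ φ : T' ⟶ T, φ.hom₁ = f₁ ∧ φ.hom₂ = f ∧
      ∀ (Cc : C) (uc : T.obj₃ ⟶ Cc) (vc : Cc ⟶ T'.obj₃⟦(1 : ℤ)⟧),
        Triangle.mk φ.hom₃ uc vc ∈ distTriang C →
        ∃ (α : Cb ⟶ Cf) (β : Cf ⟶ Cc) (γ : Cc ⟶ Cb⟦(1 : ℤ)⟧),
          Triangle.mk α β γ ∈ distTriang C := by
  obtain ⟨X, vX, wX, hX⟩ := distinguished_cocone_triangle (T'.mor₁ ≫ f)
  have hT'mk : Triangle.mk T'.mor₁ T'.mor₂ T'.mor₃ ∈ distTriang C := hT'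
  have hTmk : Triangle.mk T.mor₁ T.mor₂ T.mor₃ ∈ distTriang C := hT
  let OA := someOctahedron rfl hT'mk hCf hX
  let OB := someOctahedron comm hCb hTmk hX
  refine ⟨{ hom₁ := f₁, hom₂ := f, hom₃ := OA.m₁ ≫ OB.m₃
            comm₁ := comm.symm
            comm₂ := by simp [reassoc_of% OA.comm₁, OB.comm₃]
            comm₃ := by rw [Category.assoc, ← OB.comm₄, OA.comm₂_assoc] },
    rfl, rfl, fun Cc uc vc hCc => ?_⟩
  let OD := someOctahedron rfl OA.mem (rot_of_distTriang _ OB.mem) hCc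
  refine ⟨OB.m₁ ≫ OA.m₃, OD.m₁, OD.m₃, ?_⟩
  rw [rotate_distinguished_triangle]
  convert OD.mem using 1
  dsimp only [Triangle.rotate, Triangle.mk]
  congr 1
  rw [Functor.map_comp]
  exact (Preadditive.neg_comp _ _).symm

end CategoryTheory.Triangulated

theorem stmt3 [IsTriangulated D] (L R : Set D)
    (hL : IsTriangulatedSub D L) (hR : IsTriangulatedSub D R)
    (horth : ∀ l ∈ L, ∀ r ∈ R, ∀ f : l ⟶ r, f = 0)
    -- the two given distinguished triangles `b' → a' → c' → b'[1]` and `b → a → c → b[1]`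
    (T' T : Triangle D) (hT' : T' ∈ distTriang D) (hT : T ∈ distTriang D)
    (hb' : T'.obj₁ ∈ L) (hb : T.obj₁ ∈ L) (hc' : T'.obj₃ ∈ R) (hc : T.obj₃ ∈ R)
    -- the morphism `f : a' → a`
    (f : T'.obj₂ ⟶ T.obj₂)
    -- a choice of the cone of `f`, i.e. a distinguished triangle `a' → a → Cone(f) → a'[1]`
    (Cf : D) (u : T.obj₂ ⟶ Cf) (v : Cf ⟶ (T'.obj₂⟦(1 : ℤ)⟧ : D))
    (hCf : Triangle.mk f u v ∈ distTriang D) :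
    -- `f` extends to a morphism of triangles `(f_b, f, f_c)` …
    ∃ φ : T' ⟶ T, φ.hom₂ = f ∧
      -- … with a cone `Cb = Cone(f_b)`, which lies in `L` …
      ∃ (Cb : D) (ub : T.obj₁ ⟶ Cb) (vb : Cb ⟶ (T'.obj₁⟦(1 : ℤ)⟧ : D)),
        (Triangle.mk φ.hom₁ ub vb ∈ distTriang D) ∧ Cb ∈ L ∧
      -- … and a cone `Cc = Cone(f_c)`, which lies in `R` …
      ∃ (Cc : D) (uc : T.obj₃ ⟶ Cc) (vc : Cc ⟶ (T'.obj₃⟦(1 : ℤ)⟧ : D)),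
        (Triangle.mk φ.hom₃ uc vc ∈ distTriang D) ∧ Cc ∈ R ∧
      -- … such that there is a distinguished triangle `Cone(f_b) → Cone(f) → Cone(f_c) → ⋯`.
      ∃ (α : Cb ⟶ Cf) (β : Cf ⟶ Cc) (γ : Cc ⟶ (Cb⟦(1 : ℤ)⟧ : D)),
        Triangle.mk α β γ ∈ distTriang D := by
  obtain ⟨f₁, hf₁⟩ := Triangle.coyoneda_exact₂ T hT (T'.mor₁ ≫ f) (horth _ hb' _ hc _)
  obtain ⟨Cb, ub, vb, hCb⟩ := distinguished_cocone_triangle f₁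
  obtain ⟨φ, rfl, hφ₂, hcones⟩ :=
    Triangulated.exists_hom_with_distinguished_cones hT' hT hf₁.symm hCb hCf
  obtain ⟨Cc, uc, vc, hCc⟩ := distinguished_cocone_triangle φ.hom₃
  exact ⟨φ, hφ₂, Cb, ub, vb, hCb, hL.cone _ hCb hb' hb,
    Cc, uc, vc, hCc, hR.cone _ hCc hc' hc, hcones Cc uc vc hCc⟩
end

section
/- Let D be an idempotent-complete triangulated category and let L, R be strictly full subcategories of D, each closed under direct summands, such that Hom(l, r[n]) = 0 for every l ∈ L, r ∈ R and every integer n. Suppose a is an object of D admitting a distinguished triangle b → a → c → b[1] with b ∈ L and c ∈ R, and suppose a' is a direct summand of a (i.e. there are morphisms i : a' → a and q : a → a' with q ∘ i = id). Then a' also admits a distinguished triangle b' → a' → c' → b'[1] with b' ∈ L and c' ∈ R. -/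
/-!
Let `e = q ≫ i`, an idempotent on `a` with image `a'`. Orthogonality of `b` to `c` and to
`c⟦-1⟧` makes `g : b ⟶ a` transport endomorphisms of `a` uniquely to endomorphisms of `b`,
so `e` lifts to an idempotent `β` of `b`; its image `b'` lies in `L`. Completing
`b' ⟶ b ⟶ a ⟶ a'` to a triangle with third vertex `c'` and comparing it with the given one in
both directions yields an endomorphism of the triangle on `b' ⟶ a'` that is the identity on
the first two vertices, hence an isomorphism on `c'`, which exhibits `c'` as a retract of `c`.
-/

open CategoryTheory CategoryTheory.Limits CategoryTheory.Pretriangulated ZeroObject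

universe v u

variable {D : Type u} [Category.{v} D] [HasZeroObject D] [HasShift D ℤ] [Preadditive D]
  [∀ n : ℤ, (CategoryTheory.shiftFunctor D n).Additive] [Pretriangulated D]

namespace CategoryTheory.Pretriangulated.Triangle

lemma exists_hom_of_comm₁ {T T' : Triangle D} (hT : T ∈ distTriang D) (hT' : T' ∈ distTriang D)
    (a : T.obj₁ ⟶ T'.obj₁) (b : T.obj₂ ⟶ T'.obj₂) (comm : T.mor₁ ≫ b = a ≫ T'.mor₁) :
    ∃ φ : T ⟶ T', φ.hom₁ = a ∧ φ.hom₂ = b := by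
  obtain ⟨c, comm₂, comm₃⟩ := complete_distinguished_triangle_morphism _ _ hT hT' a b comm
  exact ⟨Triangle.homMk _ _ a b c comm comm₂ comm₃, rfl, rfl⟩

lemma eq_zero_of_comp_mor₁_eq_zero {T : Triangle D} (hT : T ∈ distTriang D) {X : D}
    (hX : ∀ f : X ⟶ T.obj₃⟦(-1 : ℤ)⟧, f = 0) (δ : X ⟶ T.obj₁) (hδ : δ ≫ T.mor₁ = 0) :
    δ = 0 := by
  obtain ⟨φ, hφ⟩ := coyoneda_exact₂ _ (inv_rot_of_distTriang _ hT) δ hδ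
  rw [hφ, show φ = 0 from hX φ]
  exact zero_comp

lemma exists_idem_comp_mor₁_eq {T : Triangle D} (hT : T ∈ distTriang D)
    (h₀ : ∀ f : T.obj₁ ⟶ T.obj₃, f = 0) (hneg : ∀ f : T.obj₁ ⟶ T.obj₃⟦(-1 : ℤ)⟧, f = 0)
    (e : T.obj₂ ⟶ T.obj₂) (he : e ≫ e = e) :
    ∃ β : T.obj₁ ⟶ T.obj₁, β ≫ β = β ∧ T.mor₁ ≫ e = β ≫ T.mor₁ := by
  obtain ⟨β, hβ⟩ := coyoneda_exact₂ _ hT (T.mor₁ ≫ e) (h₀ _)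
  refine ⟨β, ?_, hβ⟩
  have hββ : (β ≫ β) ≫ T.mor₁ = β ≫ T.mor₁ :=
    calc (β ≫ β) ≫ T.mor₁ = β ≫ T.mor₁ ≫ e := by rw [Category.assoc, ← hβ]
      _ = T.mor₁ ≫ e ≫ e := by rw [reassoc_of% hβ]
      _ = β ≫ T.mor₁ := by rw [he, hβ]
  rw [← sub_eq_zero]
  exact eq_zero_of_comp_mor₁_eq_zero hT hneg _ (by rw [Preadditive.sub_comp, hββ, sub_self])

lemma nonempty_retract_obj₃ {T T' : Triangle D} (hT : T ∈ distTriang D)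
    (hT' : T' ∈ distTriang D) (ρ₁ : Retract T'.obj₁ T.obj₁) (ρ₂ : Retract T'.obj₂ T.obj₂)
    (hi : T'.mor₁ ≫ ρ₂.i = ρ₁.i ≫ T.mor₁) (hr : T.mor₁ ≫ ρ₂.r = ρ₁.r ≫ T'.mor₁) :
    Nonempty (Retract T'.obj₃ T.obj₃) := by
  obtain ⟨φ, hφ₁, hφ₂⟩ := exists_hom_of_comm₁ hT' hT ρ₁.i ρ₂.i hi
  obtain ⟨ψ, hψ₁, hψ₂⟩ := exists_hom_of_comm₁ hT hT' ρ₁.r ρ₂.r hr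
  have : IsIso (φ ≫ ψ).hom₃ := isIso₃_of_isIso₁₂ (φ ≫ ψ) hT' hT'
    (by rw [comp_hom₁, hφ₁, hψ₁, ρ₁.retract]; infer_instance)
    (by rw [comp_hom₂, hφ₂, hψ₂, ρ₂.retract]; infer_instance)
  exact ⟨⟨φ.hom₃, ψ.hom₃ ≫ inv (φ ≫ ψ).hom₃, by rw [← Category.assoc, ← comp_hom₃,
    IsIso.hom_inv_id]⟩⟩

end CategoryTheory.Pretriangulated.Triangle

theorem stmt4_general [IsIdempotentComplete D] (L R : Set D)
    -- … and closed under direct summands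
    (hLsum : ∀ (x y : D) (i : x ⟶ y) (r : y ⟶ x), i ≫ r = 𝟙 x → y ∈ L → x ∈ L)
    (hRsum : ∀ (x y : D) (i : x ⟶ y) (r : y ⟶ x), i ≫ r = 𝟙 x → y ∈ R → x ∈ R)
    -- orthogonality in all degrees
    (horth : ∀ l ∈ L, ∀ r ∈ R, ∀ (n : ℤ) (f : l ⟶ (r⟦n⟧ : D)), f = 0)
    -- a distinguished triangle `b → a → c → b[1]` with `b ∈ L`, `c ∈ R`
    (a b c : D) (g : b ⟶ a) (h : a ⟶ c) (d : c ⟶ (b⟦(1 : ℤ)⟧ : D))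
    (hT : Triangle.mk g h d ∈ distTriang D) (hb : b ∈ L) (hc : c ∈ R)
    -- a direct summand `a'` of `a`
    (a' : D) (i : a' ⟶ a) (q : a ⟶ a') (hiq : i ≫ q = 𝟙 a') :
    ∃ (b' c' : D) (g' : b' ⟶ a') (h' : a' ⟶ c') (d' : c' ⟶ (b'⟦(1 : ℤ)⟧ : D)),
      (Triangle.mk g' h' d' ∈ distTriang D) ∧ b' ∈ L ∧ c' ∈ R := by
  have hbc : ∀ f : b ⟶ c, f = 0 := fun f => by
    rw [← cancel_mono ((shiftFunctorZero D ℤ).inv.app c), zero_comp]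
    exact horth b hb c hc 0 _
  have he : (q ≫ i) ≫ (q ≫ i) = q ≫ i := by rw [Category.assoc, reassoc_of% hiq]
  obtain ⟨β, hββ, hβ⟩ : ∃ β : b ⟶ b, β ≫ β = β ∧ g ≫ q ≫ i = β ≫ g :=
    Triangle.exists_idem_comp_mor₁_eq hT hbc (horth b hb c hc (-1)) (q ≫ i) he
  obtain ⟨b', s, p, hsp, hps⟩ := IsIdempotentComplete.idempotents_split b β hββ
  obtain ⟨c', h', d', hT'⟩ := distinguished_cocone_triangle (s ≫ g ≫ q)
  have hi : (s ≫ g ≫ q) ≫ i = s ≫ g := by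
    simp only [Category.assoc, hβ, ← hps, reassoc_of% hsp]
  have hr : g ≫ q = p ≫ s ≫ g ≫ q := by
    rw [reassoc_of% hps, ← reassoc_of% hβ, hiq, Category.comp_id]
  obtain ⟨ρ⟩ := Triangle.nonempty_retract_obj₃ hT hT' ⟨s, p, hsp⟩ ⟨i, q, hiq⟩ hi hr
  exact ⟨b', c', _, h', d', hT', hLsum b' b s p hsp hb, hRsum c' c ρ.i ρ.r ρ.retract hc⟩

theorem stmt4 [IsTriangulated D] [IsIdempotentComplete D] (L R : Set D)
    -- `L` and `R` are strictly full (closed under isomorphisms) …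
    (hLiso : ∀ ⦃x y : D⦄, (x ≅ y) → x ∈ L → y ∈ L)
    (hRiso : ∀ ⦃x y : D⦄, (x ≅ y) → x ∈ R → y ∈ R)
    -- … and closed under direct summands
    (hLsum : ∀ (x y : D) (i : x ⟶ y) (r : y ⟶ x), i ≫ r = 𝟙 x → y ∈ L → x ∈ L)
    (hRsum : ∀ (x y : D) (i : x ⟶ y) (r : y ⟶ x), i ≫ r = 𝟙 x → y ∈ R → x ∈ R)
    -- orthogonality in all degrees
    (horth : ∀ l ∈ L, ∀ r ∈ R, ∀ (n : ℤ) (f : l ⟶ (r⟦n⟧ : D)), f = 0)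
    -- a distinguished triangle `b → a → c → b[1]` with `b ∈ L`, `c ∈ R`
    (a b c : D) (g : b ⟶ a) (h : a ⟶ c) (d : c ⟶ (b⟦(1 : ℤ)⟧ : D))
    (hT : Triangle.mk g h d ∈ distTriang D) (hb : b ∈ L) (hc : c ∈ R)
    -- a direct summand `a'` of `a`
    (a' : D) (i : a' ⟶ a) (q : a ⟶ a') (hiq : i ≫ q = 𝟙 a') :
    ∃ (b' c' : D) (g' : b' ⟶ a') (h' : a' ⟶ c') (d' : c' ⟶ (b'⟦(1 : ℤ)⟧ : D)),
      (Triangle.mk g' h' d' ∈ distTriang D) ∧ b' ∈ L ∧ c' ∈ R :=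
  stmt4_general L R hLsum hRsum horth a b c g h d hT hb hc a' i q hiq
end

section
/- Let D be a triangulated category and let (D≤, D>) be an m-structure on D, i.e. a pair of full subcategories that is simultaneously a t-structure and a weight structure. Then D≤ and D> are strictly full triangulated subcategories of D: each is closed under the shifts [1] and [-1], under cones of morphisms (equivalently, under extensions together with shifts), and under direct summands. -/
/-!
`Dle` is exactly the left orthogonal of `Dgt`, and `Dgt` the right orthogonal of `Dle`: if
every map from `a` to `Dgt` vanishes, the decomposition triangle `a≤ → a → a> → a≤[1]` has
zero second map, so `a` is a retract of `a≤ ∈ Dle`, and `Dle` is closed under summands.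
Orthogonals are closed under the appropriate half of the long exact Hom sequences, and since
`Dle` and `Dgt` are stable under both `[1]` and `[-1]`, this yields closure under cones
and extensions.
-/

open CategoryTheory CategoryTheory.Limits CategoryTheory.Pretriangulated ZeroObject

universe v u

variable (D : Type u) [Category.{v} D] [HasZeroObject D] [HasShift D ℤ] [Preadditive D]
  [∀ n : ℤ, (CategoryTheory.shiftFunctor D n).Additive] [Pretriangulated D]

/-- `(Dle, Dgt)` is an m-structure on `D`: a pair of strictly full subcategories
which is simultaneously a t-structure (orthogonality, invariance, decomposition)
and a weight structure (Karoubi-closedness, orthogonality, co-invariance,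
decomposition) on `D`. -/
structure IsMStructure (Dle Dgt : Set D) : Prop where
  le_iso : ∀ ⦃x y : D⦄, (x ≅ y) → x ∈ Dle → y ∈ Dle
  gt_iso : ∀ ⦃x y : D⦄, (x ≅ y) → x ∈ Dgt → y ∈ Dgt
  /-- Orthogonality: `Hom(a, b) = 0` for `a ∈ Dle`, `b ∈ Dgt`. -/
  orth : ∀ a ∈ Dle, ∀ b ∈ Dgt, ∀ f : a ⟶ b, f = 0
  /-- t-structure invariance: `Dle[1] ⊆ Dle`. -/
  le_shift : ∀ x ∈ Dle, (x⟦(1 : ℤ)⟧ : D) ∈ Dle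
  /-- t-structure invariance: `Dgt[-1] ⊆ Dgt`. -/
  gt_negShift : ∀ x ∈ Dgt, (x⟦(-1 : ℤ)⟧ : D) ∈ Dgt
  /-- weight structure co-invariance: `Dle[-1] ⊆ Dle`. -/
  le_negShift : ∀ x ∈ Dle, (x⟦(-1 : ℤ)⟧ : D) ∈ Dle
  /-- weight structure co-invariance: `Dgt[1] ⊆ Dgt`. -/
  gt_shift : ∀ x ∈ Dgt, (x⟦(1 : ℤ)⟧ : D) ∈ Dgt
  /-- `Dle` is Karoubi-closed (closed under direct summands). -/
  le_summand : ∀ (x y : D) (i : x ⟶ y) (r : y ⟶ x), i ≫ r = 𝟙 x → y ∈ Dle → x ∈ Dle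
  /-- `Dgt` is Karoubi-closed (closed under direct summands). -/
  gt_summand : ∀ (x y : D) (i : x ⟶ y) (r : y ⟶ x), i ≫ r = 𝟙 x → y ∈ Dgt → x ∈ Dgt
  /-- Decomposition: every object of `D` fits in a distinguished triangle
  `a≤ → a → a> → a≤[1]` with `a≤ ∈ Dle` and `a> ∈ Dgt`. -/
  decomp : ∀ a : D, ∃ (x y : D) (f : x ⟶ a) (g : a ⟶ y) (d : y ⟶ (x⟦(1 : ℤ)⟧ : D)),
      (Triangle.mk f g d ∈ distTriang D) ∧ x ∈ Dle ∧ y ∈ Dgt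

namespace IsMStructure

variable {D} {Dle Dgt : Set D}

lemma mem_le_of_forall_hom_eq_zero (h : IsMStructure D Dle Dgt) {a : D}
    (ha : ∀ b ∈ Dgt, ∀ g : a ⟶ b, g = 0) : a ∈ Dle := by
  obtain ⟨x, y, f, g, d, hT, hx, hy⟩ := h.decomp a
  obtain ⟨r, hr⟩ := Triangle.coyoneda_exact₂ _ hT (𝟙 a)
    ((Category.id_comp g).trans (ha y hy g))
  exact h.le_summand a x r f hr.symm hx

lemma mem_gt_of_forall_hom_eq_zero (h : IsMStructure D Dle Dgt) {a : D}
    (ha : ∀ b ∈ Dle, ∀ f : b ⟶ a, f = 0) : a ∈ Dgt := by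
  obtain ⟨x, y, f, g, d, hT, hx, hy⟩ := h.decomp a
  obtain ⟨s, hs⟩ := Triangle.yoneda_exact₂ _ hT (𝟙 a)
    ((Category.comp_id f).trans (ha x hx f))
  exact h.gt_summand a y g s hs.symm hy

lemma obj₃_mem_le (h : IsMStructure D Dle Dgt) {T : Triangle D} (hT : T ∈ distTriang D)
    (h₁ : T.obj₁ ∈ Dle) (h₂ : T.obj₂ ∈ Dle) : T.obj₃ ∈ Dle := by
  refine h.mem_le_of_forall_hom_eq_zero fun b hb g => ?_
  obtain ⟨k, rfl⟩ := Triangle.yoneda_exact₃ _ hT g (h.orth _ h₂ _ hb _)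
  rw [h.orth _ (h.le_shift _ h₁) _ hb k, comp_zero]

lemma obj₃_mem_gt (h : IsMStructure D Dle Dgt) {T : Triangle D} (hT : T ∈ distTriang D)
    (h₁ : T.obj₁ ∈ Dgt) (h₂ : T.obj₂ ∈ Dgt) : T.obj₃ ∈ Dgt := by
  refine h.mem_gt_of_forall_hom_eq_zero fun b hb f => ?_
  obtain ⟨k, rfl⟩ := Triangle.coyoneda_exact₃ _ hT f (h.orth _ hb _ (h.gt_shift _ h₁) _)
  rw [h.orth _ hb _ h₂ k, zero_comp]

lemma obj₂_mem_le (h : IsMStructure D Dle Dgt) {T : Triangle D} (hT : T ∈ distTriang D)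
    (h₁ : T.obj₁ ∈ Dle) (h₃ : T.obj₃ ∈ Dle) : T.obj₂ ∈ Dle := by
  refine h.mem_le_of_forall_hom_eq_zero fun b hb g => ?_
  obtain ⟨k, rfl⟩ := Triangle.yoneda_exact₂ _ hT g (h.orth _ h₁ _ hb _)
  rw [h.orth _ h₃ _ hb k, comp_zero]

lemma obj₂_mem_gt (h : IsMStructure D Dle Dgt) {T : Triangle D} (hT : T ∈ distTriang D)
    (h₁ : T.obj₁ ∈ Dgt) (h₃ : T.obj₃ ∈ Dgt) : T.obj₂ ∈ Dgt := by
  refine h.mem_gt_of_forall_hom_eq_zero fun b hb f => ?_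
  obtain ⟨k, rfl⟩ := Triangle.coyoneda_exact₂ _ hT f (h.orth _ hb _ h₃ _)
  rw [h.orth _ hb _ h₁ k, zero_comp]

end IsMStructure

theorem stmt8 (Dle Dgt : Set D) (h : IsMStructure D Dle Dgt) :
    -- closure under the shifts `[1]` and `[-1]`
    (∀ x ∈ Dle, (x⟦(1 : ℤ)⟧ : D) ∈ Dle ∧ (x⟦(-1 : ℤ)⟧ : D) ∈ Dle) ∧
    (∀ x ∈ Dgt, (x⟦(1 : ℤ)⟧ : D) ∈ Dgt ∧ (x⟦(-1 : ℤ)⟧ : D) ∈ Dgt) ∧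
    -- closure under cones of morphisms
    (∀ T : Triangle D, (T ∈ distTriang D) → T.obj₁ ∈ Dle → T.obj₂ ∈ Dle → T.obj₃ ∈ Dle) ∧
    (∀ T : Triangle D, (T ∈ distTriang D) → T.obj₁ ∈ Dgt → T.obj₂ ∈ Dgt → T.obj₃ ∈ Dgt) ∧
    -- equivalently, closure under extensions
    (∀ T : Triangle D, (T ∈ distTriang D) → T.obj₁ ∈ Dle → T.obj₃ ∈ Dle → T.obj₂ ∈ Dle) ∧
    (∀ T : Triangle D, (T ∈ distTriang D) → T.obj₁ ∈ Dgt → T.obj₃ ∈ Dgt → T.obj₂ ∈ Dgt) ∧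
    -- closure under direct summands
    (∀ (x y : D) (i : x ⟶ y) (r : y ⟶ x), i ≫ r = 𝟙 x → y ∈ Dle → x ∈ Dle) ∧
    (∀ (x y : D) (i : x ⟶ y) (r : y ⟶ x), i ≫ r = 𝟙 x → y ∈ Dgt → x ∈ Dgt) :=
  ⟨fun x hx => ⟨h.le_shift x hx, h.le_negShift x hx⟩,
    fun x hx => ⟨h.gt_shift x hx, h.gt_negShift x hx⟩,
    fun _ hT => h.obj₃_mem_le hT, fun _ hT => h.obj₃_mem_gt hT,
    fun _ hT => h.obj₂_mem_le hT, fun _ hT => h.obj₂_mem_gt hT,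
    h.le_summand, h.gt_summand⟩
end

section
/- Let D be a triangulated category and let (D≤, D>) be an m-structure on D. For each object a of D, let a≤ → a → a> → a≤[1] denote its decomposition triangle with a≤ ∈ D≤ and a> ∈ D> (which, by orthogonality, is unique up to unique isomorphism and functorial in a). Then the truncation functors a ↦ a≤ and a ↦ a> are triangulated functors: they commute with the shift up to natural isomorphism, and for every distinguished triangle x → y → z → x[1] in D the induced triangles x≤ → y≤ → z≤ → x≤[1] and x> → y> → z> → x>[1] are distinguished. -/
/-!
Orthogonality and closure under direct summands identify `Dle` with the left orthogonal of
`Dgt` and `Dgt` with the right orthogonal of `Dle`. Both are stable under all shifts, so both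
are triangulated subcategories. In a decomposition triangle `a≤ → a → a> → a≤[1]`, the map
`a≤ → a` is a coreflection of `a` into `Dle` and `a → a>` is a reflection into `Dgt`. Hence
`a ↦ a≤` is the inclusion composed with a right adjoint of the inclusion of `Dle`, and
`a ↦ a>` the inclusion composed with a left adjoint of the inclusion of `Dgt`. Adjoints of
triangulated functors are triangulated, which gives the compatibility with shifts and
distinguished triangles. The connecting morphisms are natural because a map from `a>` into
`Dgt` is determined by its composite with `a → a>`.
-/

open CategoryTheory CategoryTheory.Limits CategoryTheory.Pretriangulated ZeroObject

universe v u

variable (D : Type u) [Category.{v} D] [HasZeroObject D] [HasShift D ℤ] [Preadditive D]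
  [∀ n : ℤ, (CategoryTheory.shiftFunctor D n).Additive] [Pretriangulated D]

namespace CategoryTheory

namespace ObjectProperty

section Shift

variable {C : Type*} [Category* C] [HasShift C ℤ]

lemma isStableUnderShift_of_shift_one_of_shift_neg_one (P : ObjectProperty C)
    [P.IsClosedUnderIsomorphisms] (h₁ : ∀ X, P X → P (X⟦(1 : ℤ)⟧))
    (h₂ : ∀ X, P X → P (X⟦(-1 : ℤ)⟧)) :
    P.IsStableUnderShift ℤ where
  isStableUnderShiftBy n := ⟨fun X hX => by
    induction n using Int.induction_on with
    | zero => exact P.prop_of_iso ((shiftFunctorZero C ℤ).app X).symm hX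
    | succ n ih =>
      exact P.prop_of_iso ((shiftFunctorAdd' C (n : ℤ) 1 _ rfl).app X).symm (h₁ _ ih)
    | pred n ih =>
      exact P.prop_of_iso ((shiftFunctorAdd' C (-(n : ℤ)) (-1) _ rfl).app X).symm (h₂ _ ih)⟩

end Shift

variable {C : Type*} [Category* C] {P : ObjectProperty C}

section Coreflection

variable {r : C → C} (hr : ∀ a, P (r a)) {ε : ∀ a, r a ⟶ a} (hε : ∀ a, P.isColocal (ε a))

noncomputable def coreflectionHomEquiv (X : P.FullSubcategory) (a : C) :
    (X ⟶ ⟨r a, hr a⟩) ≃ (P.ι.obj X ⟶ a) :=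
  (P.fullyFaithfulι.homEquiv (Y := ⟨r a, hr a⟩)).trans ((hε a).homEquiv X.obj X.property)

noncomputable def coreflectorOfIsColocal : C ⥤ P.FullSubcategory :=
  Adjunction.rightAdjointOfEquiv (F := P.ι)
    (fun X a => (coreflectionHomEquiv hr hε X a).symm)
    (fun X' X a f g => by
      obtain ⟨z, rfl⟩ := (coreflectionHomEquiv hr hε X a).surjective g
      rw [Equiv.symm_apply_apply, Equiv.symm_apply_eq]
      simp [coreflectionHomEquiv, Functor.FullyFaithful.homEquiv])

noncomputable def coreflectorAdjunctionOfIsColocal : P.ι ⊣ coreflectorOfIsColocal hr hε :=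
  Adjunction.adjunctionOfEquivRight _ _

@[simp]
lemma coreflectorAdjunctionOfIsColocal_counit_app (a : C) :
    (coreflectorAdjunctionOfIsColocal hr hε).counit.app a = ε a := by
  rw [coreflectorAdjunctionOfIsColocal, Adjunction.adjunctionOfEquivRight_counit_app,
    Equiv.symm_symm]
  exact Category.id_comp _

end Coreflection

section Reflection

variable {l : C → C} (hl : ∀ a, P (l a)) {η : ∀ a, a ⟶ l a} (hη : ∀ a, P.isLocal (η a))

noncomputable def reflectionHomEquiv (a : C) (Y : P.FullSubcategory) :
    (⟨l a, hl a⟩ ⟶ Y) ≃ (a ⟶ P.ι.obj Y) :=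
  (P.fullyFaithfulι.homEquiv (X := ⟨l a, hl a⟩)).trans ((hη a).homEquiv Y.obj Y.property)

noncomputable def reflectorOfIsLocal : C ⥤ P.FullSubcategory :=
  Adjunction.leftAdjointOfEquiv (G := P.ι) (reflectionHomEquiv hl hη)
    (fun a Y Y' g f => by simp [reflectionHomEquiv, Functor.FullyFaithful.homEquiv])

noncomputable def reflectorAdjunctionOfIsLocal : reflectorOfIsLocal hl hη ⊣ P.ι :=
  Adjunction.adjunctionOfEquivLeft _ _

@[simp]
lemma reflectorAdjunctionOfIsLocal_unit_app (a : C) :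
    (reflectorAdjunctionOfIsLocal hl hη).unit.app a = η a := by
  rw [reflectorAdjunctionOfIsLocal, Adjunction.adjunctionOfEquivLeft_unit_app]
  exact Category.comp_id _

end Reflection

end ObjectProperty

namespace Pretriangulated.Triangle

variable {C : Type*} [Category* C] [HasZeroObject C] [HasShift C ℤ] [Preadditive C]
  [∀ n : ℤ, (CategoryTheory.shiftFunctor C n).Additive] [Pretriangulated C]

lemma comm₃_of_injective {T T' : Triangle C} (hT : T ∈ distTriang C)
    (hT' : T' ∈ distTriang C) {φ₁ : T.obj₁ ⟶ T'.obj₁} {φ₂ : T.obj₂ ⟶ T'.obj₂}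
    {φ₃ : T.obj₃ ⟶ T'.obj₃} (comm₁ : T.mor₁ ≫ φ₂ = φ₁ ≫ T'.mor₁)
    (comm₂ : T.mor₂ ≫ φ₃ = φ₂ ≫ T'.mor₂)
    (hinj : Function.Injective fun ψ : T.obj₃ ⟶ T'.obj₃ => T.mor₂ ≫ ψ) :
    T.mor₃ ≫ φ₁⟦(1 : ℤ)⟧' = φ₃ ≫ T'.mor₃ := by
  obtain ⟨c, hc₂, hc₃⟩ :=
    complete_distinguished_triangle_morphism T T' hT hT' φ₁ φ₂ comm₁
  obtain rfl : c = φ₃ := hinj (hc₂.trans comm₂.symm)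
  exact hc₃

variable {P : ObjectProperty C} [P.IsStableUnderShift ℤ] {T : Triangle C}

lemma isColocal_mor₁ (hT : T ∈ distTriang C) (h₃ : P.rightOrthogonal T.obj₃) :
    P.isColocal T.mor₁ := by
  intro X hX
  refine ⟨fun l l' hl => ?_, fun g => ?_⟩
  · have hl₀ : (l - l') ≫ T.mor₁ = 0 := by rw [Preadditive.sub_comp, sub_eq_zero]; exact hl
    obtain ⟨m, hm⟩ := coyoneda_exact₂ _ (inv_rot_of_distTriang T hT) _ hl₀
    have hm₀ : m = 0 := P.rightOrthogonal.le_shift (-1) _ h₃ m hX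
    rw [hm₀, zero_comp] at hm
    exact sub_eq_zero.mp hm
  · obtain ⟨l, hl⟩ := coyoneda_exact₂ T hT g (h₃ _ hX)
    exact ⟨l, hl.symm⟩

lemma isLocal_mor₂ (hT : T ∈ distTriang C) (h₁ : P.leftOrthogonal T.obj₁) :
    P.isLocal T.mor₂ := by
  intro Y hY
  refine ⟨fun l l' hl => ?_, fun g => ?_⟩
  · have hl₀ : T.mor₂ ≫ (l - l') = 0 := by rw [Preadditive.comp_sub, sub_eq_zero]; exact hl
    obtain ⟨m, hm⟩ := yoneda_exact₂ _ (rot_of_distTriang T hT) _ hl₀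
    have hm₀ : m = 0 := P.leftOrthogonal.le_shift 1 _ h₁ m hY
    rw [hm₀, comp_zero] at hm
    exact sub_eq_zero.mp hm
  · obtain ⟨l, hl⟩ := yoneda_exact₂ T hT g (h₁ _ hY)
    exact ⟨l, hl.symm⟩

end Pretriangulated.Triangle

end CategoryTheory

namespace IsMStructure

variable {D} {Dle Dgt : Set D} (h : IsMStructure D Dle Dgt)

abbrev le (_ : IsMStructure D Dle Dgt) : ObjectProperty D := fun X => X ∈ Dle

abbrev gt (_ : IsMStructure D Dle Dgt) : ObjectProperty D := fun X => X ∈ Dgt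

lemma le_eq_leftOrthogonal : h.le = h.gt.leftOrthogonal := by
  ext X
  refine ⟨fun hX Y f hY => h.orth X hX Y hY f, fun hX => ?_⟩
  obtain ⟨x, y, i, p, d, hT, hx, hy⟩ := h.decomp X
  obtain ⟨s, hs⟩ :=
    Triangle.coyoneda_exact₂ _ hT (𝟙 X) ((Category.id_comp p).trans (hX p hy))
  exact h.le_summand X x s i hs.symm hx

lemma gt_eq_rightOrthogonal : h.gt = h.le.rightOrthogonal := by
  ext Y
  refine ⟨fun hY X f hX => h.orth X hX Y hY f, fun hY => ?_⟩
  obtain ⟨x, y, i, p, d, hT, hx, hy⟩ := h.decomp Y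
  obtain ⟨r, hr⟩ :=
    Triangle.yoneda_exact₂ _ hT (𝟙 Y) ((Category.comp_id i).trans (hY i hx))
  exact h.gt_summand Y y p r hr.symm hy

lemma isStableUnderShift_gt : h.gt.IsStableUnderShift ℤ :=
  have : h.gt.IsClosedUnderIsomorphisms := ⟨fun e hX => h.gt_iso e hX⟩
  ObjectProperty.isStableUnderShift_of_shift_one_of_shift_neg_one _ h.gt_shift h.gt_negShift

lemma isTriangulated_le : h.le.IsTriangulated := by
  have := h.isStableUnderShift_gt
  rw [h.le_eq_leftOrthogonal]
  infer_instance

lemma isTriangulated_gt : h.gt.IsTriangulated := by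
  have := h.isTriangulated_le
  rw [h.gt_eq_rightOrthogonal]
  infer_instance

lemma isColocal_mor₁ {T : Triangle D} (hT : T ∈ distTriang D) (h₃ : T.obj₃ ∈ Dgt) :
    h.le.isColocal T.mor₁ :=
  have := h.isTriangulated_le
  Triangle.isColocal_mor₁ hT (by rw [← h.gt_eq_rightOrthogonal]; exact h₃)

lemma isLocal_mor₂ {T : Triangle D} (hT : T ∈ distTriang D) (h₁ : T.obj₁ ∈ Dle) :
    h.gt.isLocal T.mor₂ :=
  have := h.isTriangulated_gt
  Triangle.isLocal_mor₂ hT (by rw [← h.le_eq_leftOrthogonal]; exact h₁)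

end IsMStructure

theorem stmt9 (Dle Dgt : Set D) (h : IsMStructure D Dle Dgt) :
    -- the truncations `a ↦ a≤` and `a ↦ a>` are (triangulated) functors `Fle`, `Fgt`,
    -- with natural decomposition triangles `Fle a → a → Fgt a → (Fle a)[1]`
    ∃ (Fle Fgt : D ⥤ D) (ι : Fle ⟶ 𝟭 D) (π : 𝟭 D ⟶ Fgt)
      (δ : ∀ a : D, Fgt.obj a ⟶ ((Fle.obj a)⟦(1 : ℤ)⟧ : D)),
      (∀ a : D, Fle.obj a ∈ Dle) ∧
      (∀ a : D, Fgt.obj a ∈ Dgt) ∧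
      (∀ a : D, Triangle.mk (ι.app a) (π.app a) (δ a) ∈ distTriang D) ∧
      -- naturality of the connecting morphism of the decomposition triangles
      (∀ (a b : D) (f : a ⟶ b), Fgt.map f ≫ δ b = δ a ≫ ((Fle.map f)⟦(1 : ℤ)⟧')) ∧
      -- the truncation functors commute with the shift up to natural isomorphism
      Nonempty (shiftFunctor D (1 : ℤ) ⋙ Fle ≅ Fle ⋙ shiftFunctor D (1 : ℤ)) ∧
      Nonempty (shiftFunctor D (1 : ℤ) ⋙ Fgt ≅ Fgt ⋙ shiftFunctor D (1 : ℤ)) ∧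
      -- they send distinguished triangles to distinguished triangles
      (∀ T : Triangle D, (T ∈ distTriang D) →
        ∃ d : Fle.obj T.obj₃ ⟶ ((Fle.obj T.obj₁)⟦(1 : ℤ)⟧ : D),
          Triangle.mk (Fle.map T.mor₁) (Fle.map T.mor₂) d ∈ distTriang D) ∧
      (∀ T : Triangle D, (T ∈ distTriang D) →
        ∃ d : Fgt.obj T.obj₃ ⟶ ((Fgt.obj T.obj₁)⟦(1 : ℤ)⟧ : D),
          Triangle.mk (Fgt.map T.mor₁) (Fgt.map T.mor₂) d ∈ distTriang D) := by
  have := h.isTriangulated_le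
  have := h.isTriangulated_gt
  choose x y f g d hd hx hy using h.decomp
  have hf (a : D) : h.le.isColocal (f a) := h.isColocal_mor₁ (hd a) (hy a)
  have hg (a : D) : h.gt.isLocal (g a) := h.isLocal_mor₂ (hd a) (hx a)
  let adjLE := ObjectProperty.coreflectorAdjunctionOfIsColocal (P := h.le) hx hf
  let adjGT := ObjectProperty.reflectorAdjunctionOfIsLocal (P := h.gt) hy hg
  let := adjLE.rightAdjointCommShift ℤ
  let := adjGT.leftAdjointCommShift ℤ
  have := adjLE.commShift_of_leftAdjoint ℤ
  have := adjGT.commShift_of_rightAdjoint ℤ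
  have := adjLE.isTriangulated_rightAdjoint
  have := adjGT.isTriangulated_leftAdjoint
  refine ⟨_ ⋙ h.le.ι, _ ⋙ h.gt.ι, adjLE.counit, adjGT.unit, d, hx, hy,
    fun a => ?_, fun a b φ => ?_,
    ⟨Functor.commShiftIso _ 1⟩, ⟨Functor.commShiftIso _ 1⟩,
    fun T hT => ⟨_, Functor.map_distinguished _ T hT⟩,
    fun T hT => ⟨_, Functor.map_distinguished _ T hT⟩⟩
  · simp only [adjLE, adjGT, ObjectProperty.coreflectorAdjunctionOfIsColocal_counit_app,
      ObjectProperty.reflectorAdjunctionOfIsLocal_unit_app]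
    exact hd a
  · have hε := adjLE.counit.naturality φ
    have hη := adjGT.unit.naturality φ
    simp only [adjLE, adjGT, ObjectProperty.coreflectorAdjunctionOfIsColocal_counit_app,
      ObjectProperty.reflectorAdjunctionOfIsLocal_unit_app] at hε hη
    exact (Triangle.comm₃_of_injective (hd a) (hd b) hε.symm hη.symm
      (hg a _ (hy b)).injective).symm
end
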